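/- arXiv:math/0606246 — 2 statements merged into one kernel-verified Lean document; each statement's English description precedes it below -/
import Mathlib

section
/- Let Δ be a Cohen–Macaulay simplicial complex of dimension d−1 with CM-connectivity sequence (q_0,…,q_{d−1}). Then the number of (d−1)-dimensional faces of Δ satisfies f_{d−1}(Δ) ≥ q_0 q_1 ⋯ q_{d−1} / d!. -/
open scoped Classical

namespace MultConj

variable {n : ℕ}

/-- `K` is (the set of faces of) an abstract simplicial complex on the
vertex set `Fin n`: it contains the empty face and is closed under subsets. -/
def IsComplex (K : Finset (Finset (Fin n))) : Prop :=
  ∅ ∈ K ∧ ∀ F ∈ K, ∀ G ⊆ F, G ∈ K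

/-- The induced subcomplex `Δ_W` on a vertex set `W`. -/
def induced (K : Finset (Finset (Fin n))) (W : Finset (Fin n)) :
    Finset (Finset (Fin n)) :=
  K.filter fun F => F ⊆ W

/-- The link of a face `F`. -/
def link (K : Finset (Finset (Fin n))) (F : Finset (Fin n)) :
    Finset (Finset (Fin n)) :=
  K.filter fun G => F ∩ G = ∅ ∧ F ∪ G ∈ K

/-- The `i`-skeleton: all faces of dimension at most `i`,
i.e. with at most `i+1` vertices. -/
def skel (K : Finset (Finset (Fin n))) (i : ℕ) : Finset (Finset (Fin n)) :=
  K.filter fun F => F.card ≤ i + 1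

/-- The number of faces with `j` vertices, i.e. `f_{j-1}(K)`. -/
def fcount (K : Finset (Finset (Fin n))) (j : ℕ) : ℕ :=
  (K.filter fun F => F.card = j).card

/-- The dimension of `K`, as an integer. -/
noncomputable def dimOf (K : Finset (Finset (Fin n))) : ℤ :=
  ((K.sup fun F => F.card : ℕ) : ℤ) - 1

variable (k : Type) [Field k]

/-- Simplicial chains supported on the faces of `K` having `j` vertices
(that is, `(j-1)`-dimensional chains), with coefficients in `k`. -/
abbrev chain (K : Finset (Finset (Fin n))) (j : ℕ) : Type :=
  {F : Finset (Fin n) // F ∈ K ∧ F.card = j} → k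

/-- The simplicial boundary operator (with the standard orientation coming
from the linear order on the vertices), viewed as landing in the space of
all functions on finsets. -/
noncomputable def bdry (K : Finset (Finset (Fin n))) (j : ℕ)
    (c : chain k K j) : Finset (Fin n) → k :=
  fun G => ∑ v : Fin n,
    if h : v ∉ G ∧ insert v G ∈ K ∧ (insert v G).card = j then
      (-1 : k) ^ (G.filter fun w => w < v).card * c ⟨insert v G, h.2⟩
    else 0

/-- Extension of a chain by zero to a function on all finsets. -/
def ext (K : Finset (Finset (Fin n))) (j : ℕ) (c : chain k K j) :
    Finset (Fin n) → k :=
  fun F => if h : F ∈ K ∧ F.card = j then c ⟨F, h⟩ else 0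

/-- `H̃_p(K; k) ≠ 0`: there is a reduced `p`-cycle which is not a boundary.
(For `p ≤ -2` this is false, as there is no `j : ℕ` with `j = p + 1`.) -/
def homNonzero (K : Finset (Finset (Fin n))) (p : ℤ) : Prop :=
  ∃ j : ℕ, (j : ℤ) = p + 1 ∧
    ∃ c : chain k K j, bdry k K j c = 0 ∧
      ∀ b : chain k K (j + 1), bdry k K (j + 1) b ≠ ext k K j c

/-- `H̃_p(K; k) ≅ k`: there is a reduced `p`-cycle `z` which is not a
boundary, and modulo boundaries every `p`-cycle is a multiple of `z`. -/
def homIsK (K : Finset (Finset (Fin n))) (p : ℤ) : Prop :=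
  ∃ j : ℕ, (j : ℤ) = p + 1 ∧
    ∃ z : chain k K j, bdry k K j z = 0 ∧
      (∀ b : chain k K (j + 1), bdry k K (j + 1) b ≠ ext k K j z) ∧
      ∀ c : chain k K j, bdry k K j c = 0 →
        ∃ a : k, ∃ b : chain k K (j + 1),
          bdry k K (j + 1) b = ext k K j (c - a • z)

/-- Cohen–Macaulayness of `K` over `k`, via Reisner's criterion:
`H̃_i(lk F; k) = 0` for every face `F` and every `i < dim K - |F|`. -/
def IsCM (K : Finset (Finset (Fin n))) : Prop :=
  ∀ F ∈ K, ∀ i : ℤ, i < dimOf K - F.card → ¬ homNonzero k (link K F) i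

/-- `K` is `q`-Cohen–Macaulay over `k`: removing any at most `q - 1`
vertices leaves a Cohen–Macaulay complex of the same dimension. -/
def IsQCM (q : ℕ) (K : Finset (Finset (Fin n))) : Prop :=
  ∀ U : Finset (Fin n), U.card ≤ q - 1 →
    IsCM k (induced K Uᶜ) ∧ dimOf (induced K Uᶜ) = dimOf K

/-- `q(K)`: the largest `q` for which `K` is `q`-CM over `k`. -/
noncomputable def qConn (K : Finset (Finset (Fin n))) : ℕ :=
  sSup {q : ℕ | IsQCM k q K}

/-- The CM-connectivity sequence: `q_i = q(Skel_i K)`. -/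
noncomputable def qSeq (K : Finset (Finset (Fin n))) (i : ℕ) : ℕ :=
  qConn k (skel K i)

/-- The minimal shifts `m_i` in the minimal free resolution of the face ring,
via Hochster's formula. -/
noncomputable def mshift (K : Finset (Finset (Fin n))) (i : ℕ) : ℕ :=
  sInf {m : ℕ | ∃ W : Finset (Fin n), W.card = m ∧
    homNonzero k (induced K W) ((W.card : ℤ) - i - 1)}

/-- The maximal shifts `M_i` in the minimal free resolution of the face ring,
via Hochster's formula. -/
noncomputable def Mshift (K : Finset (Finset (Fin n))) (i : ℕ) : ℕ :=
  sSup {m : ℕ | ∃ W : Finset (Fin n), W.card = m ∧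
    homNonzero k (induced K W) ((W.card : ℤ) - i - 1)}

/-- `K` is pure: every maximal face has cardinality `dim K + 1`. -/
def IsPure (K : Finset (Finset (Fin n))) : Prop :=
  ∀ F ∈ K, (∀ G ∈ K, F ⊆ G → G = F) → (F.card : ℤ) = dimOf K + 1

/-- `K` is connected: any two vertices are joined by a path of edges. -/
def Connected (K : Finset (Finset (Fin n))) : Prop :=
  ∀ u v : Fin n, {u} ∈ K → {v} ∈ K →
    Relation.ReflTransGen (fun a b => ({a, b} : Finset (Fin n)) ∈ K) u v

/-- `K` is Gorenstein* over `k`; by Stanley's topological characterization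
this means that `K` is a `k`-homology sphere: for every face `F` the link of
`F` has vanishing reduced homology below dimension `dim K - |F|` and reduced
homology isomorphic to `k` in dimension `dim K - |F|`. -/
def IsGorensteinStar (K : Finset (Finset (Fin n))) : Prop :=
  IsComplex K ∧
  (∀ F ∈ K, ∀ i : ℤ, i < dimOf K - F.card → ¬ homNonzero k (link K F) i) ∧
  (∀ F ∈ K, homIsK k (link K F) (dimOf K - F.card))

/-!
If `Δ` is `q`-CM of dimension `j`, every face `R` with `j` vertices lies in at least `q` facets:
otherwise deleting the fewer than `q` vertices `v` with `R ∪ {v} ∈ Δ` leaves a complex of the same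
dimension in which `R` is a facet, so its link `{∅}` carries nonzero `H̃_{-1}`, contradicting
Reisner's criterion. Counting (facet, vertex) incidences gives `q_j f_{j-1} ≤ (j + 1) f_j` for the
`j`-skeleton, which has the same `f_{j-1}` and `f_j` as `Δ`, and multiplying these inequalities for
`j < d` gives `q_0 ⋯ q_{d-1} ≤ d! f_{d-1}`.
-/

open Finset

section Complex

variable {K : Finset (Finset (Fin n))}

lemma mem_skel {i : ℕ} {F : Finset (Fin n)} : F ∈ skel K i ↔ F ∈ K ∧ F.card ≤ i + 1 :=
  mem_filter

lemma mem_induced {W F : Finset (Fin n)} : F ∈ induced K W ↔ F ∈ K ∧ F ⊆ W :=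
  mem_filter

lemma mem_link {F G : Finset (Fin n)} : G ∈ link K F ↔ G ∈ K ∧ F ∩ G = ∅ ∧ F ∪ G ∈ K :=
  mem_filter

def linkVertices (K : Finset (Finset (Fin n))) (F : Finset (Fin n)) : Finset (Fin n) :=
  univ.filter fun v => v ∉ F ∧ insert v F ∈ K

lemma mem_linkVertices {F : Finset (Fin n)} {v : Fin n} :
    v ∈ linkVertices K F ↔ v ∉ F ∧ insert v F ∈ K := by
  simp [linkVertices]

lemma fcount_zero (hK : IsComplex K) : fcount K 0 = 1 := by
  rw [fcount, card_eq_one]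
  refine ⟨∅, Finset.ext fun F => ?_⟩
  simp only [mem_filter, mem_singleton, card_eq_zero]
  exact ⟨And.right, fun h => ⟨h ▸ hK.1, h⟩⟩

lemma exists_mem_card_eq_dimOf_add_one (hK : K.Nonempty) :
    ∃ F ∈ K, (F.card : ℤ) = dimOf K + 1 := by
  obtain ⟨F, hF, hsup⟩ := exists_mem_eq_sup K hK card
  exact ⟨F, hF, by rw [dimOf, ← hsup]; ring⟩

lemma IsComplex.skel (hK : IsComplex K) (t : ℕ) : IsComplex (skel K t) :=
  ⟨mem_skel.2 ⟨hK.1, by simp⟩, fun F hF G hGF =>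
    mem_skel.2 ⟨hK.2 F (mem_skel.1 hF).1 G hGF, (card_le_card hGF).trans (mem_skel.1 hF).2⟩⟩

lemma fcount_skel {t j : ℕ} (hj : j ≤ t + 1) : fcount (skel K t) j = fcount K j := by
  unfold fcount skel
  rw [filter_filter]
  congr 1
  ext F
  simp only [mem_filter]
  constructor
  · exact fun h => ⟨h.1, h.2.2⟩
  · exact fun h => ⟨h.1, h.2 ▸ hj, h.2⟩

lemma dimOf_skel (hK : IsComplex K) {t : ℕ} {F : Finset (Fin n)} (hF : F ∈ K)
    (ht : t + 1 ≤ F.card) : dimOf (skel K t) = t := by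
  have hsup : ((skel K t).sup card) = t + 1 := by
    refine le_antisymm (Finset.sup_le fun G hG => (mem_skel.1 hG).2) ?_
    obtain ⟨G, hGF, hGc⟩ := exists_subset_card_eq ht
    exact hGc ▸ le_sup (mem_skel.2 ⟨hK.2 F hF G hGF, hGc.le⟩)
  rw [dimOf, hsup]
  push_cast
  ring

/-- Both sides count the pairs `(F, v)` with `v ∈ F ∈ K` and `|F| = j + 1`. -/
lemma succ_mul_fcount_succ_eq_sum_card_linkVertices (hK : IsComplex K) (j : ℕ) :
    (j + 1) * fcount K (j + 1) =
      ∑ R ∈ K.filter (fun R => R.card = j), (linkVertices K R).card := by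
  have hpairs : (j + 1) * fcount K (j + 1) =
      ((K.filter fun F => F.card = j + 1).sigma fun F => F).card := by
    rw [card_sigma, sum_const_nat fun F hF => (mem_filter.1 hF).2, mul_comm, fcount]
  rw [hpairs, ← card_sigma]
  refine card_bij' (fun p _ => ⟨p.1.erase p.2, p.2⟩) (fun p _ => ⟨insert p.2 p.1, p.2⟩)
    ?_ ?_ ?_ ?_
  · rintro ⟨F, v⟩ hp
    simp only [mem_sigma, mem_filter] at hp
    obtain ⟨⟨hF, hFc⟩, hv⟩ := hp
    simp only [mem_sigma, mem_filter, mem_linkVertices, insert_erase hv]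
    exact ⟨⟨hK.2 F hF _ (erase_subset v F), by rw [card_erase_of_mem hv, hFc]; rfl⟩,
      notMem_erase v F, hF⟩
  · rintro ⟨R, v⟩ hp
    simp only [mem_sigma, mem_filter, mem_linkVertices] at hp
    obtain ⟨⟨-, hRc⟩, hvR, hins⟩ := hp
    simp only [mem_sigma, mem_filter]
    exact ⟨⟨hins, by rw [card_insert_of_notMem hvR, hRc]⟩, mem_insert_self v R⟩
  · rintro ⟨F, v⟩ hp
    simp only [mem_sigma] at hp
    simp [insert_erase hp.2]
  · rintro ⟨R, v⟩ hp
    simp only [mem_sigma, mem_linkVertices] at hp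
    simp [erase_insert hp.2.1]

lemma mem_induced_compl_linkVertices {R : Finset (Fin n)} (hR : R ∈ K) :
    R ∈ induced K (linkVertices K R)ᶜ :=
  mem_induced.2 ⟨hR, fun _ hv => mem_compl.2 fun hvN => (mem_linkVertices.1 hvN).1 hv⟩

lemma link_induced_compl_linkVertices (hK : IsComplex K) {R : Finset (Fin n)} (hR : R ∈ K) :
    link (induced K (linkVertices K R)ᶜ) R = {∅} := by
  ext G
  rw [mem_link, mem_singleton]
  constructor
  · rintro ⟨hG, hRG, hRGK⟩
    refine eq_empty_of_forall_notMem fun v hv =>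
      mem_compl.1 ((mem_induced.1 hG).2 hv) (mem_linkVertices.2 ⟨?_, ?_⟩)
    · exact fun hvR => notMem_empty v (hRG ▸ mem_inter.2 ⟨hvR, hv⟩)
    · exact hK.2 _ (mem_induced.1 hRGK).1 _
        (insert_subset (mem_union_right R hv) subset_union_left)
  · rintro rfl
    rw [union_empty]
    exact ⟨mem_induced.2 ⟨hK.1, empty_subset _⟩, inter_empty R,
      mem_induced_compl_linkVertices hR⟩

end Complex

lemma homNonzero_singleton_empty (k : Type) [Field k] :
    homNonzero k ({∅} : Finset (Finset (Fin n))) (-1) := by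
  have hno_insert : ∀ (v : Fin n) (G : Finset (Fin n)), insert v G ∉ ({∅} : Finset _) :=
    fun v G h => insert_ne_empty v G (mem_singleton.1 h)
  refine ⟨0, by norm_num, fun _ => 1, ?_, fun b hb => ?_⟩
  · funext G
    exact sum_eq_zero fun v _ => dif_neg fun h => hno_insert v G h.2.1
  · have h0 := congrFun hb ∅
    rw [bdry, ext, dif_pos ⟨mem_singleton_self ∅, card_empty⟩,
      sum_eq_zero fun v _ => dif_neg fun h => hno_insert v ∅ h.2.1] at h0
    exact one_ne_zero h0.symm

section QCM

variable {k : Type} [Field k] {K : Finset (Finset (Fin n))}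

lemma IsQCM.le_card_linkVertices (hK : IsComplex K) {q : ℕ} (hq : IsQCM k q K)
    {R : Finset (Fin n)} (hR : R ∈ K) (hRc : (R.card : ℤ) = dimOf K) :
    q ≤ (linkVertices K R).card := by
  by_contra! hlt
  obtain ⟨hCM, hdim⟩ := hq (linkVertices K R) (by omega)
  refine hCM R (mem_induced_compl_linkVertices hR) (-1) (by omega) ?_
  rw [link_induced_compl_linkVertices hK hR]
  exact homNonzero_singleton_empty k

lemma qConn_le_card_linkVertices (hK : IsComplex K) {R : Finset (Fin n)} (hR : R ∈ K)
    (hRc : (R.card : ℤ) = dimOf K) : qConn k K ≤ (linkVertices K R).card :=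
  csSup_le' fun _ hq => IsQCM.le_card_linkVertices hK hq hR hRc

lemma qConn_mul_fcount_le (hK : IsComplex K) {j : ℕ} (hdim : dimOf K = j) :
    qConn k K * fcount K j ≤ (j + 1) * fcount K (j + 1) := by
  rw [succ_mul_fcount_succ_eq_sum_card_linkVertices hK, fcount, mul_comm, ← smul_eq_mul,
    ← sum_const]
  exact sum_le_sum fun R hR =>
    qConn_le_card_linkVertices hK (mem_filter.1 hR).1 (by rw [(mem_filter.1 hR).2, hdim])

lemma qSeq_mul_fcount_le (hK : IsComplex K) {j : ℕ} {F : Finset (Fin n)} (hF : F ∈ K)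
    (hj : j + 1 ≤ F.card) : qSeq k K j * fcount K j ≤ (j + 1) * fcount K (j + 1) := by
  have h := qConn_mul_fcount_le (k := k) (hK.skel j) (dimOf_skel hK hF hj)
  rwa [fcount_skel (by omega), fcount_skel le_rfl] at h

lemma prod_qSeq_le_factorial_mul_fcount (hK : IsComplex K) {F : Finset (Fin n)} (hF : F ∈ K) :
    ∀ j ≤ F.card, ∏ i ∈ range j, qSeq k K i ≤ j.factorial * fcount K j
  | 0, _ => by simp [fcount_zero hK]
  | j + 1, hj =>
    calc ∏ i ∈ range (j + 1), qSeq k K i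
        = (∏ i ∈ range j, qSeq k K i) * qSeq k K j := prod_range_succ _ j
      _ ≤ j.factorial * fcount K j * qSeq k K j :=
        Nat.mul_le_mul_right _ (prod_qSeq_le_factorial_mul_fcount hK hF j (by omega))
      _ = j.factorial * (qSeq k K j * fcount K j) := by ring
      _ ≤ j.factorial * ((j + 1) * fcount K (j + 1)) :=
        Nat.mul_le_mul_left _ (qSeq_mul_fcount_le hK hF hj)
      _ = (j + 1).factorial * fcount K (j + 1) := by rw [Nat.factorial_succ]; ring

end QCM

theorem facet_count_lower_bound_general
    (n d : ℕ) (k : Type) [Field k] (K : Finset (Finset (Fin n)))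
    (hK : IsComplex K)
    (hdim : dimOf K = (d : ℤ) - 1) :
    (∏ i ∈ Finset.range d, (qSeq k K i : ℚ)) / d.factorial ≤ fcount K d := by
  obtain ⟨F, hF, hFc⟩ := exists_mem_card_eq_dimOf_add_one ⟨∅, hK.1⟩
  have hd : d ≤ F.card := by omega
  have h := prod_qSeq_le_factorial_mul_fcount (k := k) hK hF d hd
  rw [div_le_iff₀ (by positivity), mul_comm]
  exact_mod_cast h

/-- Theorem 1.4: for a Cohen–Macaulay complex of dimension `d - 1` with
CM-connectivity sequence `(q_0, …, q_{d-1})`, the number of facets satisfies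
`f_{d-1} ≥ q_0 q_1 ⋯ q_{d-1} / d!`. -/
theorem facet_count_lower_bound
    (n d : ℕ) (k : Type) [Field k] (K : Finset (Finset (Fin n)))
    (hd : 0 < d)
    (hK : IsComplex K) (hv : ∀ v : Fin n, {v} ∈ K)
    (hdim : dimOf K = (d : ℤ) - 1)
    (hCM : IsCM k K) :
    (∏ i ∈ Finset.range d, (qSeq k K i : ℚ)) / d.factorial ≤ fcount K d :=
  facet_count_lower_bound_general n d k K hK hdim

end MultConj
end

section
/- If Δ′ is a j-dimensional Cohen–Macaulay simplicial complex, then its codimension-one skeleton Skel_{j−1}(Δ′) is 2-CM. Consequently, if Δ′ is a q-CM j-dimensional complex, then Skel_{j−1}(Δ′) is (q+1)-CM. -/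
open scoped Classical

namespace MultConj

variable {n : ℕ}

variable (k : Type) [Field k]

/-!
By Reisner's criterion everything happens in links. If `T` is `Skel_{j-1} K` with at most one
vertex `v` deleted and `F ∈ T`, then `lk_T F` consists of the faces of `lk_K F` avoiding `v` with
at most `j - |F|` vertices. A cycle of `lk_T F` below the top dimension bounds in `lk_K F` since
`K` is CM, and the filling automatically has small enough faces; that it can be chosen to avoid
`v` uses that `lk_K (F ∪ {v})` is CM as well. For a `q`-CM complex, delete `q - 1` of the vertices
in `K`, which stays CM of dimension `j`, and the last one in the skeleton.
-/

section

variable {k}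

open Finset

/-- `incidence S w = ±1` is the sign with which `S` occurs in the boundary of `insert w S`. -/
def incidence (S : Finset (Fin n)) (w : Fin n) : k :=
  (-1) ^ (S.filter fun x => x < w).card

theorem incidence_mul_self (S : Finset (Fin n)) (w : Fin n) :
    incidence S w * incidence S w = (1 : k) := by
  rw [incidence, ← mul_pow]; norm_num

theorem incidence_insert {S : Finset (Fin n)} {v w : Fin n} (hv : v ∉ S) :
    (incidence (insert v S) w : k) = (if v < w then -1 else 1) * incidence S w := by
  unfold incidence
  rw [filter_insert]
  split_ifs with h
  · rw [card_insert_of_notMem (fun h' => hv (mem_filter.1 h').1), pow_succ, mul_comm]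
  · rw [one_mul]

theorem incidence_insert_swap {S : Finset (Fin n)} {v w : Fin n} (hv : v ∉ S) (hw : w ∉ S)
    (hvw : v ≠ w) :
    (incidence (insert v S) w * incidence (insert w S) v : k)
      = -(incidence S v * incidence S w) := by
  rw [incidence_insert hv, incidence_insert hw]
  rcases hvw.lt_or_gt with h | h
  · rw [if_pos h, if_neg h.not_gt]; ring
  · rw [if_neg h.not_gt, if_pos h]; ring

def boundary : (Finset (Fin n) → k) →ₗ[k] (Finset (Fin n) → k) where
  toFun z G := ∑ w ∈ Gᶜ, incidence G w * z (insert w G)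
  map_add' f g := by funext G; simp [mul_add, sum_add_distrib]
  map_smul' a f := by funext G; simp [mul_sum, mul_left_comm]

theorem boundary_apply (z : Finset (Fin n) → k) (G : Finset (Fin n)) :
    boundary z G = ∑ w ∈ Gᶜ, incidence G w * z (insert w G) := rfl

def cone (v : Fin n) : (Finset (Fin n) → k) →ₗ[k] (Finset (Fin n) → k) where
  toFun z G := if v ∈ G then incidence (G.erase v) v * z (G.erase v) else 0
  map_add' f g := by funext G; split_ifs <;> simp [*, mul_add]
  map_smul' a f := by funext G; split_ifs <;> simp [*, mul_left_comm]

theorem cone_apply (v : Fin n) (z : Finset (Fin n) → k) (G : Finset (Fin n)) :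
    cone v z G = if v ∈ G then incidence (G.erase v) v * z (G.erase v) else 0 := rfl

def contract (v : Fin n) : (Finset (Fin n) → k) →ₗ[k] (Finset (Fin n) → k) where
  toFun z G := if v ∈ G then 0 else incidence G v * z (insert v G)
  map_add' f g := by funext G; split_ifs <;> simp [*, mul_add]
  map_smul' a f := by funext G; split_ifs <;> simp [*, mul_left_comm]

theorem contract_apply (v : Fin n) (z : Finset (Fin n) → k) (G : Finset (Fin n)) :
    contract v z G = if v ∈ G then 0 else incidence G v * z (insert v G) := rfl

theorem cone_contract_apply (v : Fin n) (z : Finset (Fin n) → k) (G : Finset (Fin n)) :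
    cone v (contract v z) G = if v ∈ G then z G else 0 := by
  by_cases hv : v ∈ G
  · rw [cone_apply, if_pos hv, if_pos hv, contract_apply, if_neg (notMem_erase v G),
      insert_erase hv, ← mul_assoc, incidence_mul_self, one_mul]
  · rw [cone_apply, if_neg hv, if_neg hv]

theorem boundary_cone_add_cone_boundary (v : Fin n) (z : Finset (Fin n) → k) :
    boundary (cone v z) + cone v (boundary z) = z := by
  funext G
  rw [Pi.add_apply]
  by_cases hvG : v ∈ G
  · obtain ⟨S, hvS, rfl⟩ : ∃ S, v ∉ S ∧ G = insert v S :=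
      ⟨G.erase v, notMem_erase v G, (insert_erase hvG).symm⟩
    rw [cone_apply, if_pos hvG, erase_insert hvS, boundary_apply, boundary_apply,
      ← add_sum_erase _ _ (mem_compl.2 hvS), ← compl_insert, mul_add, ← mul_assoc,
      incidence_mul_self, one_mul, mul_sum, ← add_assoc, add_right_comm, ← sum_add_distrib,
      add_eq_right]
    refine sum_eq_zero fun w hw => ?_
    have hwS : w ∉ insert v S := mem_compl.1 hw
    have hvw : v ≠ w := fun h => hwS (h ▸ mem_insert_self v S)
    have hvwS : v ∉ insert w S := fun h => hvS ((mem_insert.1 h).resolve_left hvw)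
    rw [cone_apply, if_pos (mem_insert_of_mem (mem_insert_self v S)), insert_comm,
      erase_insert hvwS, ← mul_assoc, ← mul_assoc,
      incidence_insert_swap hvS (fun h => hwS (mem_insert_of_mem h)) hvw]
    ring
  · rw [cone_apply (G := G), if_neg hvG, add_zero, boundary_apply,
      sum_eq_single_of_mem v (mem_compl.2 hvG), cone_apply, if_pos (mem_insert_self v G),
      erase_insert hvG, ← mul_assoc, incidence_mul_self, one_mul]
    intro w _ hwv
    rw [cone_apply, if_neg (fun h => hvG ((mem_insert.1 h).resolve_left (Ne.symm hwv))), mul_zero]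

theorem boundary_contract (v : Fin n) (z : Finset (Fin n) → k) :
    boundary (contract v z) = -contract v (boundary z) := by
  funext G
  rw [Pi.neg_apply, contract_apply (z := boundary z)]
  by_cases hvG : v ∈ G
  · rw [if_pos hvG, neg_zero, boundary_apply]
    refine sum_eq_zero fun w _ => ?_
    rw [contract_apply, if_pos (mem_insert_of_mem hvG), mul_zero]
  · rw [if_neg hvG, boundary_apply, boundary_apply, ← add_sum_erase _ _ (mem_compl.2 hvG),
      contract_apply, if_pos (mem_insert_self v G), mul_zero, zero_add, ← compl_insert,
      mul_sum, ← sum_neg_distrib]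
    refine sum_congr rfl fun w hw => ?_
    have hwG : w ∉ insert v G := mem_compl.1 hw
    have hvw : v ≠ w := fun h => hwG (h ▸ mem_insert_self v G)
    rw [contract_apply, if_neg (fun h => hvG ((mem_insert.1 h).resolve_left hvw)), insert_comm,
      incidence_insert (fun h => hwG (mem_insert_of_mem h)), incidence_insert hvG]
    rcases hvw.lt_or_gt with h | h
    · rw [if_pos h, if_neg h.not_gt]; ring
    · rw [if_neg h.not_gt, if_pos h]; ring

/-- `x` is a chain of `L` with `m` vertices per face (of degree `m - 1`). -/
def IsChain (L : Finset (Finset (Fin n))) (m : ℕ) (x : Finset (Fin n) → k) : Prop :=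
  ∀ G, x G ≠ 0 → G ∈ L ∧ G.card = m

section IsChain

variable {L L' : Finset (Finset (Fin n))} {m : ℕ} {x y : Finset (Fin n) → k}

theorem IsChain.mono (hx : IsChain L m x) (h : L ⊆ L') : IsChain L' m x :=
  fun G hG => ⟨h (hx G hG).1, (hx G hG).2⟩

theorem isChain_zero : IsChain L m (0 : Finset (Fin n) → k) :=
  fun _ h => absurd rfl h

theorem IsChain.add (hx : IsChain L m x) (hy : IsChain L m y) : IsChain L m (x + y) := by
  intro G hG
  by_cases hxG : x G = 0
  · exact hy G (by simpa [hxG] using hG)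
  · exact hx G hxG

theorem isChain_ext (c : chain k L m) : IsChain L m (ext k L m c) := by
  intro G hG
  unfold ext at hG
  split_ifs at hG with h
  · exact h
  · exact absurd rfl hG

theorem ext_restrict (hx : IsChain L m x) : ext k L m (fun c => x c.1) = x := by
  funext G
  unfold ext
  split_ifs with h
  · rfl
  · exact (not_imp_comm.1 (hx G) h).symm

theorem bdry_eq_boundary (c : chain k L m) : bdry k L m c = boundary (ext k L m c) := by
  funext G
  rw [boundary_apply, bdry, ← sum_compl_add_sum G, add_eq_left.2 (sum_eq_zero fun w hw => by
    rw [dif_neg fun h => h.1 hw]), sum_congr rfl fun w hw => ?_]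
  rw [mem_compl] at hw
  by_cases h : insert w G ∈ L ∧ (insert w G).card = m
  · rw [dif_pos ⟨hw, h⟩, ext, dif_pos h, incidence]
  · rw [dif_neg fun h' => h h'.2, ext, dif_neg h, mul_zero]

theorem not_homNonzero_iff {p : ℤ} :
    ¬ homNonzero k L p ↔ ∀ m : ℕ, (m : ℤ) = p + 1 → ∀ x : Finset (Fin n) → k,
      IsChain L m x → boundary x = 0 → ∃ y, IsChain L (m + 1) y ∧ boundary y = x := by
  constructor
  · intro h m hm x hx hcyc
    by_contra hno
    refine h ⟨m, hm, fun c => x c.1, by rw [bdry_eq_boundary, ext_restrict hx, hcyc],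
      fun b hb => ?_⟩
    rw [bdry_eq_boundary, ext_restrict hx] at hb
    exact hno ⟨_, isChain_ext b, hb⟩
  · rintro h ⟨m, hm, c, hcyc, hnb⟩
    obtain ⟨y, hy, hyx⟩ := h m hm _ (isChain_ext c) (by rw [← bdry_eq_boundary, hcyc])
    exact hnb (fun b => y b.1) (by rw [bdry_eq_boundary, ext_restrict hy, hyx])

end IsChain

section Complex

variable {K : Finset (Finset (Fin n))}

theorem IsComplex.induced (hK : IsComplex K) (W : Finset (Fin n)) :
    IsComplex (induced K W) :=
  ⟨mem_filter.2 ⟨hK.1, empty_subset W⟩, fun F hF G hGF =>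
    mem_filter.2 ⟨hK.2 F (mem_filter.1 hF).1 G hGF, hGF.trans (mem_filter.1 hF).2⟩⟩

theorem induced_univ (K : Finset (Finset (Fin n))) : induced K univ = K :=
  filter_true_of_mem fun F _ => subset_univ F

theorem mem_link_insert {F G : Finset (Fin n)} {v : Fin n} (hK : IsComplex K) (hvG : v ∉ G)
    (h : insert v G ∈ link K F) : G ∈ link K (insert v F) := by
  obtain ⟨hvGK, hFvG, hFvGK⟩ := by simpa only [link, mem_filter] using h
  refine mem_filter.2 ⟨hK.2 _ hvGK G (subset_insert v G), ?_, ?_⟩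
  · rw [insert_inter_of_notMem hvG]
    exact subset_empty.1 (hFvG ▸ inter_subset_inter_left (subset_insert v G))
  · rwa [insert_union, ← union_insert]

theorem link_insert_subset {F : Finset (Fin n)} {v : Fin n} (hK : IsComplex K) :
    link K (insert v F) ⊆ induced (link K F) {v}ᶜ := by
  intro G hG
  obtain ⟨hGK, hvFG, hvFGK⟩ := by simpa only [link, mem_filter] using hG
  refine mem_filter.2 ⟨mem_filter.2 ⟨hGK, ?_, hK.2 _ hvFGK _ ?_⟩, ?_⟩
  · exact subset_empty.1 (hvFG ▸ inter_subset_inter_right (subset_insert v F))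
  · exact union_subset_union (subset_insert v F) subset_rfl
  · exact subset_compl_singleton.2 fun hvG =>
      notMem_empty v (hvFG ▸ mem_inter.2 ⟨mem_insert_self v F, hvG⟩)

variable {F : Finset (Fin n)} {m : ℕ} {x y : Finset (Fin n) → k}

theorem IsChain.eq_zero_of_notMem (hK : IsComplex K) (hF : F ∉ K)
    (hx : IsChain (link K F) m x) : x = 0 := by
  funext G
  by_contra hG
  obtain ⟨hGK, -, hFGK⟩ := by simpa only [link, mem_filter] using (hx G hG).1
  exact hF (hK.2 _ hFGK F subset_union_left)

theorem IsChain.contract (hK : IsComplex K) (v : Fin n) (hy : IsChain (link K F) (m + 1) y) :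
    IsChain (link K (insert v F)) m (contract v y) := by
  intro G hG
  rw [contract_apply] at hG
  split_ifs at hG with hvG
  · exact absurd rfl hG
  · obtain ⟨hlink, hcard⟩ := hy _ (right_ne_zero_of_mul hG)
    exact ⟨mem_link_insert hK hvG hlink, by rw [card_insert_of_notMem hvG] at hcard; omega⟩

end Complex

section CohenMacaulay

variable {K : Finset (Finset (Fin n))} {F : Finset (Fin n)} {m : ℕ} {x : Finset (Fin n) → k}

theorem IsCM.exists_boundary (hCM : IsCM k K) (hK : IsComplex K)
    (hm : (m : ℤ) ≤ dimOf K - F.card) (hx : IsChain (link K F) m x) (hcyc : boundary x = 0) :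
    ∃ y, IsChain (link K F) (m + 1) y ∧ boundary y = x := by
  by_cases hF : F ∈ K
  · exact not_homNonzero_iff.1 (hCM F hF (m - 1) (by omega)) m (by ring) x hx hcyc
  · rw [hx.eq_zero_of_notMem hK hF]
    exact ⟨0, isChain_zero, map_zero boundary⟩

/-- Fill in `lk F`; the part of the filling `y` through `v` is the cone over its contraction `b`
at `v`, and `∂b = -(contraction of ∂y) = 0`, so `b = ∂y'` in `lk (F ∪ {v})` and
`y - v * b + y'` avoids `v`. -/
theorem IsCM.exists_boundary_avoiding (hCM : IsCM k K) (hK : IsComplex K) (v : Fin n)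
    (hm : (m : ℤ) + F.card < dimOf K) (hx : IsChain (induced (link K F) {v}ᶜ) m x)
    (hcyc : boundary x = 0) :
    ∃ y, IsChain (induced (link K F) {v}ᶜ) (m + 1) y ∧ boundary y = x := by
  obtain ⟨y, hy, rfl⟩ := hCM.exists_boundary hK (by omega) (hx.mono (filter_subset _ _)) hcyc
  have hx_contract : contract v (boundary y) = 0 := by
    funext G
    rw [contract_apply]
    split_ifs with hvG
    · rfl
    · by_contra hG
      exact subset_compl_singleton.1 (mem_filter.1 (hx _ (right_ne_zero_of_mul hG)).1).2
        (mem_insert_self v G)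
  have hb_cycle : boundary (contract v y) = 0 := by
    rw [boundary_contract, hx_contract, neg_zero]
  obtain ⟨y', hy', hy'b⟩ := hCM.exists_boundary hK
    (by have := card_insert_le v F; omega) (hy.contract hK v) hb_cycle
  refine ⟨y - cone v (contract v y) + y', ?_, ?_⟩
  · refine IsChain.add (fun G hG => ?_) (hy'.mono (link_insert_subset hK))
    rw [Pi.sub_apply, cone_contract_apply] at hG
    split_ifs at hG with hvG
    · exact absurd (sub_self _) hG
    · obtain ⟨hlink, hcard⟩ := hy G (by simpa using hG)
      exact ⟨mem_filter.2 ⟨hlink, subset_compl_singleton.2 hvG⟩, hcard⟩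
  · have hcone : boundary (cone v (contract v y)) = contract v y := by
      simpa [hb_cycle] using boundary_cone_add_cone_boundary v (contract v y)
    rw [map_add, map_sub, hcone, hy'b, sub_add_cancel]

theorem IsCM.exists_boundary_induced (hCM : IsCM k K) (hK : IsComplex K) {W : Finset (Fin n)}
    (hW : Wᶜ.card ≤ 1) (hm : (m : ℤ) + F.card < dimOf K)
    (hx : IsChain (induced (link K F) W) m x) (hcyc : boundary x = 0) :
    ∃ y, IsChain (induced (link K F) W) (m + 1) y ∧ boundary y = x := by
  rcases Nat.le_one_iff_eq_zero_or_eq_one.1 hW with hW | hW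
  · rw [card_eq_zero, compl_eq_empty_iff] at hW
    subst hW
    rw [induced_univ] at hx ⊢
    exact hCM.exists_boundary hK (by omega) hx hcyc
  · obtain ⟨v, hv⟩ := card_eq_one.1 hW
    rw [← compl_compl W, hv] at hx ⊢
    exact hCM.exists_boundary_avoiding hK v hm hx hcyc

end CohenMacaulay

section Skeleton

variable {K : Finset (Finset (Fin n))} {j : ℕ} {W : Finset (Fin n)}

theorem mem_link_induced_skeleton {F G : Finset (Fin n)} (hFW : F ⊆ W) :
    G ∈ link (induced (K.filter fun H => H.card ≤ j) W) F ↔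
      G ∈ induced (link K F) W ∧ F.card + G.card ≤ j := by
  simp only [link, induced, mem_filter]
  constructor
  · rintro ⟨⟨⟨hGK, -⟩, hGW⟩, hFG, ⟨hFGK, hcard⟩, -⟩
    rw [card_union_of_disjoint (disjoint_iff_inter_eq_empty.2 hFG)] at hcard
    exact ⟨⟨⟨hGK, hFG, hFGK⟩, hGW⟩, hcard⟩
  · rintro ⟨⟨⟨hGK, hFG, hFGK⟩, hGW⟩, hcard⟩
    have hunion := card_union_of_disjoint (disjoint_iff_inter_eq_empty.2 hFG)
    exact ⟨⟨⟨hGK, by omega⟩, hGW⟩, hFG, ⟨hFGK, by omega⟩, union_subset hFW hGW⟩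

theorem dimOf_induced_skeleton (hK : IsComplex K) (hdim : dimOf K = j) (hW : Wᶜ.card ≤ 1) :
    dimOf (induced (K.filter fun F => F.card ≤ j) W) = j - 1 := by
  obtain ⟨F, hFK, hF⟩ := exists_mem_eq_sup K ⟨∅, hK.1⟩ card
  have hFcard : F.card = j + 1 := by rw [dimOf, hF] at hdim; omega
  have hFW : j ≤ (F ∩ W).card := by
    have hsplit := card_inter_add_card_sdiff F W
    have hout : (F \ W).card ≤ Wᶜ.card :=
      card_le_card fun a ha => mem_compl.2 (mem_sdiff.1 ha).2
    omega
  obtain ⟨G, hGFW, hG⟩ := exists_subset_card_eq hFW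
  have hGmem : G ∈ induced (K.filter fun F => F.card ≤ j) W :=
    mem_filter.2 ⟨mem_filter.2 ⟨hK.2 F hFK G (hGFW.trans inter_subset_left), hG.le⟩,
      hGFW.trans inter_subset_right⟩
  have hsup : (induced (K.filter fun F => F.card ≤ j) W).sup card = j :=
    le_antisymm (Finset.sup_le fun H hH => (mem_filter.1 (mem_filter.1 hH).1).2)
      (hG.symm.le.trans (le_sup (f := card) hGmem))
  rw [dimOf, hsup]

theorem isCM_induced_skeleton (hCM : IsCM k K) (hK : IsComplex K) (hdim : dimOf K = j)
    (hW : Wᶜ.card ≤ 1) : IsCM k (induced (K.filter fun F => F.card ≤ j) W) := by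
  intro F hF i hi
  obtain ⟨⟨hFK, -⟩, hFW⟩ := by simpa only [induced, mem_filter] using hF
  rw [dimOf_induced_skeleton hK hdim hW] at hi
  rw [not_homNonzero_iff]
  intro m hm x hx hcyc
  obtain ⟨y, hy, hyx⟩ := hCM.exists_boundary_induced hK hW (by omega)
    (hx.mono fun G hG => ((mem_link_induced_skeleton hFW).1 hG).1) hcyc
  refine ⟨y, fun G hG => ?_, hyx⟩
  obtain ⟨hGlink, hGcard⟩ := hy G hG
  exact ⟨(mem_link_induced_skeleton hFW).2 ⟨hGlink, by omega⟩, hGcard⟩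

theorem induced_skeleton_induced (K : Finset (Finset (Fin n))) (j : ℕ) (A B : Finset (Fin n)) :
    induced ((induced K A).filter fun F => F.card ≤ j) B =
      induced (K.filter fun F => F.card ≤ j) (A ∩ B) := by
  ext F
  simp only [induced, mem_filter, subset_inter_iff]
  tauto

theorem isQCM_one_of_isCM (hCM : IsCM k K) : IsQCM k 1 K := by
  intro U hU
  rw [card_eq_zero.1 (Nat.le_zero.1 hU), compl_empty, induced_univ]
  exact ⟨hCM, rfl⟩

theorem isQCM_succ_skeleton {q : ℕ} (hK : IsComplex K) (hdim : dimOf K = j)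
    (hq : IsQCM k q K) : IsQCM k (q + 1) (K.filter fun F => F.card ≤ j) := by
  intro U hU
  obtain ⟨U', hU'U, hU'⟩ := exists_subset_card_eq (Nat.sub_le U.card 1)
  obtain ⟨hCM', hdim'⟩ := hq U' (by omega)
  have hW : (U \ U')ᶜᶜ.card ≤ 1 := by
    rw [compl_compl, card_sdiff_of_subset hU'U]
    omega
  have hrestrict : induced (K.filter fun F => F.card ≤ j) Uᶜ =
      induced ((induced K U'ᶜ).filter fun F => F.card ≤ j) (U \ U')ᶜ := by
    rw [induced_skeleton_induced, ← compl_union, union_sdiff_of_subset hU'U]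
  have hskel : dimOf (K.filter fun F => F.card ≤ j) = j - 1 := by
    simpa only [induced_univ] using dimOf_induced_skeleton hK hdim (W := univ) (by simp)
  rw [hrestrict, hskel]
  exact ⟨isCM_induced_skeleton hCM' (hK.induced _) (hdim' ▸ hdim) hW,
    dimOf_induced_skeleton (hK.induced _) (hdim' ▸ hdim) hW⟩

end Skeleton

end

theorem codim_one_skeleton_2CM_general
    (n j : ℕ) (k : Type) [Field k] (K : Finset (Finset (Fin n)))
    (hK : IsComplex K)
    (hdim : dimOf K = (j : ℤ)) :
    (IsCM k K → IsQCM k 2 (K.filter fun F => F.card ≤ j)) ∧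
    (∀ q : ℕ, IsQCM k q K → IsQCM k (q + 1) (K.filter fun F => F.card ≤ j)) :=
  ⟨fun hCM => isQCM_succ_skeleton hK hdim (isQCM_one_of_isCM hCM),
    fun _ hq => isQCM_succ_skeleton hK hdim hq⟩

/-- Proposition 3.2: the codimension-one skeleton (faces of dimension
`≤ j - 1`, i.e. with at most `j` vertices) of a `j`-dimensional CM complex is
2-CM; consequently the codimension-one skeleton of a `q`-CM `j`-dimensional
complex is `(q+1)`-CM. -/
theorem codim_one_skeleton_2CM
    (n j : ℕ) (k : Type) [Field k] (K : Finset (Finset (Fin n)))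
    (hK : IsComplex K) (hv : ∀ v : Fin n, {v} ∈ K)
    (hdim : dimOf K = (j : ℤ)) :
    (IsCM k K → IsQCM k 2 (K.filter fun F => F.card ≤ j)) ∧
    (∀ q : ℕ, IsQCM k q K → IsQCM k (q + 1) (K.filter fun F => F.card ≤ j)) :=
  codim_one_skeleton_2CM_general n j k K hK hdim

end MultConj
end
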